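/- arXiv:2104.06349 — 3 statements merged into one kernel-verified Lean document; each statement's English description precedes it below -/
import Mathlib

section
/- The partial trace does not increase the trace norm: for every complex matrix M indexed by (m × n) × (m × n), ‖Tr₂ M‖₁ ≤ ‖M‖₁, where Tr₂ M is the partial trace of M over the second tensor factor. -/
/-!
Duality for the trace norm: `Re tr (X A) ≤ ‖A‖₁` for every contraction `X`, and equality is
attained by a partial isometry built from the eigenvectors of `AᴴA`. The partial trace is the
adjoint of `W ↦ W ⊗ 1`, which maps contractions to contractions, so the contraction attaining
`‖Tr₂ M‖₁` lifts to one on the product space witnessing `‖Tr₂ M‖₁ ≤ ‖M‖₁`.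
-/

open Matrix
open scoped ComplexOrder

/-- The trace norm of a complex square matrix: the trace of the positive
semidefinite square root of `Aᴴ * A`. -/
noncomputable def traceNorm {d : Type*} [Fintype d] [DecidableEq d] (A : Matrix d d ℂ) : ℝ :=
  ((((Matrix.posSemidef_conjTranspose_mul_self A).1.eigenvectorUnitary : Matrix d d ℂ) *
      diagonal (((↑) : ℝ → ℂ) ∘ Real.sqrt ∘ (Matrix.posSemidef_conjTranspose_mul_self A).1.eigenvalues) *
      (star (Matrix.posSemidef_conjTranspose_mul_self A).1.eigenvectorUnitary : Matrix d d ℂ)).trace).re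

/-- Partial trace over the second tensor factor. -/
noncomputable def ptrace2 {m n : Type*} [Fintype n] (M : Matrix (m × n) (m × n) ℂ) :
    Matrix m m ℂ :=
  Matrix.of fun i j => ∑ k, M (i, k) (j, k)

open Kronecker

namespace Matrix

variable {𝕜 d : Type*} [RCLike 𝕜] [Fintype d]

def IsContraction [DecidableEq d] (X : Matrix d d 𝕜) : Prop :=
  (1 - X * Xᴴ).PosSemidef

lemma star_mulVec_dotProduct_mulVec {R : Type*} [CommSemiring R] [StarRing R]
    (B C : Matrix d d R) (v w : d → R) :
    star (B *ᵥ v) ⬝ᵥ C *ᵥ w = star v ⬝ᵥ (Bᴴ * C) *ᵥ w := by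
  rw [star_mulVec, ← dotProduct_mulVec, mulVec_mulVec]

lemma re_star_dotProduct_le (x y : d → 𝕜) :
    RCLike.re (star x ⬝ᵥ y) ≤ √(RCLike.re (star x ⬝ᵥ x)) * √(RCLike.re (star y ⬝ᵥ y)) := by
  have h := re_inner_le_norm (𝕜 := 𝕜) (WithLp.toLp 2 x) (WithLp.toLp 2 y)
  simp only [norm_eq_sqrt_re_inner (𝕜 := 𝕜), EuclideanSpace.inner_toLp_toLp] at h
  simpa only [dotProduct_comm _ (star _)] using h

lemma re_star_dotProduct_mul_mulVec_le (X A : Matrix d d 𝕜) (v : d → 𝕜) :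
    RCLike.re (star v ⬝ᵥ (X * A) *ᵥ v) ≤
      √(RCLike.re (star v ⬝ᵥ (X * Xᴴ) *ᵥ v)) * √(RCLike.re (star v ⬝ᵥ (Aᴴ * A) *ᵥ v)) := by
  simpa only [star_mulVec_dotProduct_mulVec, conjTranspose_conjTranspose] using
    re_star_dotProduct_le (Xᴴ *ᵥ v) (A *ᵥ v)

variable [DecidableEq d]

lemma trace_eq_sum_star_dotProduct_mulVec (U : unitaryGroup d 𝕜) (Y : Matrix d d 𝕜) :
    Y.trace = ∑ i, star ((U : Matrix d d 𝕜)ᵀ i) ⬝ᵥ Y *ᵥ (U : Matrix d d 𝕜)ᵀ i := by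
  calc Y.trace = (star (U : Matrix d d 𝕜) * Y * U).trace := by
        rw [trace_mul_cycle, mem_unitaryGroup_iff.mp U.2, Matrix.one_mul]
    _ = _ := by
        simp only [trace, diag_apply, mul_mul_apply]
        rfl

lemma IsContraction.re_star_dotProduct_mulVec_le {X : Matrix d d 𝕜} (hX : X.IsContraction)
    (v : d → 𝕜) : RCLike.re (star v ⬝ᵥ (X * Xᴴ) *ᵥ v) ≤ RCLike.re (star v ⬝ᵥ v) := by
  have h := (RCLike.nonneg_iff.mp (hX.dotProduct_mulVec_nonneg v)).1
  rwa [sub_mulVec, one_mulVec, dotProduct_sub, map_sub, sub_nonneg] at h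

lemma IsContraction.kronecker_one {m n : Type*} [Fintype m] [DecidableEq m] [Fintype n]
    [DecidableEq n] {X : Matrix m m 𝕜} (hX : X.IsContraction) :
    (X ⊗ₖ (1 : Matrix n n 𝕜)).IsContraction := by
  have h : 1 - (X ⊗ₖ (1 : Matrix n n 𝕜)) * (X ⊗ₖ (1 : Matrix n n 𝕜))ᴴ = (1 - X * Xᴴ) ⊗ₖ 1 := by
    rw [conjTranspose_kronecker, conjTranspose_one, ← mul_kronecker_mul, Matrix.one_mul,
      ← one_kronecker_one]
    exact (eq_sub_of_add_eq (by rw [← add_kronecker, sub_add_cancel])).symm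
  rw [IsContraction, h]
  exact PosSemidef.kronecker hX PosSemidef.one

end Matrix

section TraceNorm

variable {d : Type*} [Fintype d] [DecidableEq d]

lemma traceNorm_eq_sum_sqrt_eigenvalues (A : Matrix d d ℂ) :
    traceNorm A = ∑ i, √((posSemidef_conjTranspose_mul_self A).1.eigenvalues i) := by
  rw [traceNorm, trace_mul_cycle, Unitary.coe_star_mul_self, Matrix.one_mul, trace_diagonal,
    Complex.re_sum]
  rfl

/-- The diagonal entries of `X * A` in an eigenbasis `vᵢ` of `AᴴA` are bounded via Cauchy–Schwarz
by `‖Xᴴ vᵢ‖ ‖A vᵢ‖ ≤ √λᵢ`. -/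
lemma re_trace_mul_le_traceNorm {X : Matrix d d ℂ} (hX : X.IsContraction) (A : Matrix d d ℂ) :
    (X * A).trace.re ≤ traceNorm A := by
  set hH := (posSemidef_conjTranspose_mul_self A).1
  rw [traceNorm_eq_sum_sqrt_eigenvalues,
    trace_eq_sum_star_dotProduct_mulVec hH.eigenvectorUnitary, Complex.re_sum]
  refine Finset.sum_le_sum fun i _ => ?_
  simp only [IsHermitian.eigenvectorUnitary_transpose_apply]
  set v : d → ℂ := ⇑(hH.eigenvectorBasis i)
  have hv : (star v ⬝ᵥ v).re = 1 := by
    have h := inner_self_eq_norm_sq_to_K (𝕜 := ℂ) (hH.eigenvectorBasis i)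
    rw [hH.eigenvectorBasis.orthonormal.1 i, EuclideanSpace.inner_eq_star_dotProduct,
      dotProduct_comm] at h
    simp [v, h]
  have hXv : √(star v ⬝ᵥ (X * Xᴴ) *ᵥ v).re ≤ 1 :=
    Real.sqrt_le_one.mpr ((hX.re_star_dotProduct_mulVec_le v).trans hv.le)
  calc (star v ⬝ᵥ (X * A) *ᵥ v).re
      ≤ √(star v ⬝ᵥ (X * Xᴴ) *ᵥ v).re * √(star v ⬝ᵥ (Aᴴ * A) *ᵥ v).re :=
        re_star_dotProduct_mul_mulVec_le X A v
    _ ≤ 1 * √(hH.eigenvalues i) := by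
        rw [hH.eigenvalues_eq i]
        exact mul_le_mul_of_nonneg_right hXv (Real.sqrt_nonneg _)
    _ = √(hH.eigenvalues i) := one_mul _

/-- With `U` diagonalising `AᴴA = U Λ Uᴴ`, the witness is `X = U Λ^{-1/2} (A U)ᴴ`, where the
inverse square root is taken entrywise with `(√0)⁻¹ = 0`; then `X Xᴴ = U (Λ^{-1/2} Λ Λ^{-1/2}) Uᴴ`
is a projection. -/
lemma exists_isContraction_re_trace_mul_eq_traceNorm (A : Matrix d d ℂ) :
    ∃ X : Matrix d d ℂ, X.IsContraction ∧ (X * A).trace.re = traceNorm A := by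
  set hH := (posSemidef_conjTranspose_mul_self A).1
  set U : Matrix d d ℂ := ↑hH.eigenvectorUnitary
  set e := hH.eigenvalues
  have hU : U * Uᴴ = 1 := mem_unitaryGroup_iff.mp hH.eigenvectorUnitary.2
  have hD : (A * U)ᴴ * (A * U) = diagonal (fun i => (e i : ℂ)) := by
    have h := hH.conjStarAlgAut_star_eigenvectorUnitary
    rw [Unitary.conjStarAlgAut_star_apply] at h
    rw [← star_eq_conjTranspose, star_mul, ← Matrix.mul_assoc, Matrix.mul_assoc (star U)]
    exact h
  set G : Matrix d d ℂ := diagonal (fun i => ((√(e i))⁻¹ : ℝ))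
  have hG : Gᴴ = G := by simp [G]
  refine ⟨U * G * (A * U)ᴴ, ?_, ?_⟩
  · have h : 1 - U * G * (A * U)ᴴ * (U * G * (A * U)ᴴ)ᴴ =
        U * diagonal (fun i => ((1 - (√(e i))⁻¹ * e i * (√(e i))⁻¹ : ℝ) : ℂ)) * Uᴴ := calc
      _ = U * 1 * Uᴴ - U * (G * ((A * U)ᴴ * (A * U)) * G) * Uᴴ := by
        rw [Matrix.mul_one, hU]
        simp only [conjTranspose_mul, conjTranspose_conjTranspose, hG, Matrix.mul_assoc]
      _ = _ := by
        rw [hD, ← Matrix.sub_mul, ← Matrix.mul_sub, diagonal_mul_diagonal, diagonal_mul_diagonal,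
          ← diagonal_one, diagonal_sub]
        push_cast
        rfl
    rw [IsContraction, h]
    refine (PosSemidef.diagonal fun i => Complex.zero_le_real.mpr ?_).mul_mul_conjTranspose_same U
    have he : 0 ≤ e i := (posSemidef_conjTranspose_mul_self A).eigenvalues_nonneg i
    rw [sub_nonneg, show (√(e i))⁻¹ * e i * (√(e i))⁻¹ = e i / √(e i) ^ 2 by ring,
      Real.sq_sqrt he]
    exact div_self_le_one _
  · calc (U * G * (A * U)ᴴ * A).trace.re = (G * ((A * U)ᴴ * (A * U))).trace.re := by
          rw [Matrix.mul_assoc, Matrix.mul_assoc, trace_mul_comm]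
          simp only [Matrix.mul_assoc]
      _ = traceNorm A := by
          rw [hD, diagonal_mul_diagonal, trace_diagonal, traceNorm_eq_sum_sqrt_eigenvalues,
            Complex.re_sum]
          refine Finset.sum_congr rfl fun i _ => ?_
          rw [← Complex.ofReal_mul, Complex.ofReal_re, inv_mul_eq_div, Real.div_sqrt]

end TraceNorm

lemma trace_kronecker_one_mul_eq_trace_mul_ptrace2 {m n : Type*} [Fintype m] [Fintype n] [DecidableEq n]
    (W : Matrix m m ℂ) (M : Matrix (m × n) (m × n) ℂ) :
    ((W ⊗ₖ (1 : Matrix n n ℂ)) * M).trace = (W * ptrace2 M).trace := by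
  simp only [trace, diag_apply, mul_apply, ptrace2, of_apply, kroneckerMap_apply, one_apply,
    Fintype.sum_prod_type, mul_ite, mul_one, mul_zero, ite_mul, zero_mul, Finset.sum_ite_eq,
    Finset.mem_univ, if_true, Finset.mul_sum]
  exact Finset.sum_congr rfl fun i _ => Finset.sum_comm

/-- The partial trace does not increase the trace norm. -/
theorem traceNorm_ptrace2_le {m n : Type*} [Fintype m] [DecidableEq m]
    [Fintype n] [DecidableEq n] (M : Matrix (m × n) (m × n) ℂ) :
    traceNorm (ptrace2 M) ≤ traceNorm M := by
  obtain ⟨X, hX, hXtr⟩ := exists_isContraction_re_trace_mul_eq_traceNorm (ptrace2 M)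
  calc traceNorm (ptrace2 M) = (X * ptrace2 M).trace.re := hXtr.symm
    _ = ((X ⊗ₖ (1 : Matrix n n ℂ)) * M).trace.re := by rw [trace_kronecker_one_mul_eq_trace_mul_ptrace2]
    _ ≤ traceNorm M := re_trace_mul_le_traceNorm hX.kronecker_one M
end

section
/- The probability of a measurement outcome deviates by at most half the trace distance: let M be a complex d × d matrix with I − MᴴM positive semidefinite, and let ρ and σ be density matrices. Then |tr(M·ρ·Mᴴ) − tr(M·σ·Mᴴ)| ≤ (1/2)·‖ρ − σ‖₁, where both traces are real numbers. -/
/-!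
Write `Δ = ρ - σ = Δ⁺ - Δ⁻` with `Δ⁺, Δ⁻ ≥ 0` and `Δ⁺ + Δ⁻ = |Δ|`. Since `tr Δ = 0`, both parts
have trace `‖Δ‖₁ / 2`. With `E = Mᴴ M` we have `0 ≤ E ≤ 1`, so `tr (E Δ^±)` lies between `0` and
`tr Δ^±`, and the difference `tr (E Δ) = tr (E Δ⁺) - tr (E Δ⁻)` of two numbers in `[0, ‖Δ‖₁ / 2]`
is at most `‖Δ‖₁ / 2` in absolute value.
-/

open Matrix
open scoped ComplexOrder

/-- A density matrix: positive semidefinite (hence Hermitian) with trace 1. -/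
def IsDensity {d : Type*} [Fintype d] (ρ : Matrix d d ℂ) : Prop :=
  ρ.PosSemidef ∧ ρ.trace = 1

open scoped MatrixOrder

namespace Matrix

variable {n 𝕜 : Type*} [Fintype n] [DecidableEq n] [RCLike 𝕜]

lemma PosSemidef.trace_mul_nonneg {A B : Matrix n n 𝕜} (hA : A.PosSemidef) (hB : B.PosSemidef) :
    0 ≤ (A * B).trace := by
  obtain ⟨C, rfl⟩ := CStarAlgebra.nonneg_iff_eq_star_mul_self.mp hA.nonneg
  rw [mul_assoc, trace_mul_comm, mul_assoc, ← mul_assoc]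
  exact (hB.mul_mul_conjTranspose_same C).trace_nonneg

lemma PosSemidef.trace_mul_le_trace {E X : Matrix n n 𝕜} (hE : (1 - E).PosSemidef)
    (hX : X.PosSemidef) : (E * X).trace ≤ X.trace := by
  simpa [sub_mul, trace_sub] using hE.trace_mul_nonneg hX

lemma IsHermitian.trace_posPart_of_trace_eq_zero {A : Matrix n n 𝕜} (hA : A.IsHermitian) (h0 : A.trace = 0) :
    (A⁺).trace = (CFC.abs A).trace / 2 := by
  have h := congrArg trace (CFC.abs_add_self A hA.isSelfAdjoint)
  rw [trace_add, h0, add_zero, trace_smul] at h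
  simp [h]

lemma IsHermitian.trace_negPart_of_trace_eq_zero {A : Matrix n n 𝕜} (hA : A.IsHermitian) (h0 : A.trace = 0) :
    (A⁻).trace = (CFC.abs A).trace / 2 := by
  have h := congrArg trace (CFC.abs_sub_self A hA.isSelfAdjoint)
  rw [trace_sub, h0, sub_zero, trace_smul] at h
  simp [h]

lemma IsHermitian.abs_re_trace_mul_le_of_trace_eq_zero {E A : Matrix n n 𝕜}
    (hE₀ : E.PosSemidef) (hE₁ : (1 - E).PosSemidef) (hA : A.IsHermitian) (h0 : A.trace = 0) :
    |RCLike.re (E * A).trace| ≤ RCLike.re (CFC.abs A).trace / 2 := by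
  have hpos := (CFC.posPart_nonneg A).posSemidef
  have hneg := (CFC.negPart_nonneg A).posSemidef
  have hsplit : (E * A).trace = (E * A⁺).trace - (E * A⁻).trace := by
    rw [← trace_sub, ← mul_sub, CFC.posPart_sub_negPart A hA.isSelfAdjoint]
  have hpos_le := RCLike.re_le_re (hE₁.trace_mul_le_trace hpos)
  have hneg_le := RCLike.re_le_re (hE₁.trace_mul_le_trace hneg)
  have hpos_nonneg := (RCLike.nonneg_iff.mp (hE₀.trace_mul_nonneg hpos)).1
  have hneg_nonneg := (RCLike.nonneg_iff.mp (hE₀.trace_mul_nonneg hneg)).1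
  have hpos_tr : RCLike.re (A⁺).trace = RCLike.re (CFC.abs A).trace / 2 := by
    rw [hA.trace_posPart_of_trace_eq_zero h0, ← RCLike.ofReal_ofNat, RCLike.div_re_ofReal]
  have hneg_tr : RCLike.re (A⁻).trace = RCLike.re (CFC.abs A).trace / 2 := by
    rw [hA.trace_negPart_of_trace_eq_zero h0, ← RCLike.ofReal_ofNat, RCLike.div_re_ofReal]
  rw [hsplit, map_sub, abs_sub_le_iff]
  constructor <;> linarith

end Matrix

lemma traceNorm_eq_re_trace_cfcAbs {d : Type*} [Fintype d] [DecidableEq d] (A : Matrix d d ℂ) :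
    traceNorm A = (CFC.abs A).trace.re := by
  have h : CFC.abs A = cfc Real.sqrt (Aᴴ * A) := by
    rw [CFC.abs, CFC.sqrt_eq_real_sqrt (star A * A) (star_mul_self_nonneg A), cfcₙ_eq_cfc]
    rfl
  rw [h, (posSemidef_conjTranspose_mul_self A).1.cfc_eq]
  rfl

/-- The probability of a measurement outcome deviates by at most half the
trace distance. -/
theorem measurement_prob_deviation {d : Type*} [Fintype d] [DecidableEq d]
    (M : Matrix d d ℂ) (hM : (1 - Mᴴ * M).PosSemidef)
    (ρ σ : Matrix d d ℂ) (hρ : IsDensity ρ) (hσ : IsDensity σ) :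
    |((M * ρ * Mᴴ).trace).re - ((M * σ * Mᴴ).trace).re| ≤
      (1 / 2) * traceNorm (ρ - σ) := by
  have hcycle : (M * ρ * Mᴴ).trace - (M * σ * Mᴴ).trace = (Mᴴ * M * (ρ - σ)).trace := by
    rw [mul_sub, trace_sub, trace_mul_cycle, trace_mul_cycle M σ]
  have htrace : (ρ - σ).trace = 0 := by rw [trace_sub, hρ.2, hσ.2, sub_self]
  rw [← Complex.sub_re, hcycle, traceNorm_eq_re_trace_cfcAbs, one_div_mul_eq_div]
  exact (hρ.1.isHermitian.sub hσ.1.isHermitian).abs_re_trace_mul_le_of_trace_eq_zero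
    (posSemidef_conjTranspose_mul_self M) hM htrace
end

section
/- Transfer-matrix evaluation of the MPS inner product: let n ≥ 1 and w ≥ 1, and for each k ∈ {1, …, n} and s ∈ {0, 1} let A_k^{(s)} and B_k^{(s)} be complex w × w matrices. Define amplitudes ψ(i) = tr(A₁^{(i₁)} · A₂^{(i₂)} · ⋯ · A_n^{(i_n)}) and φ(i) = tr(B₁^{(i₁)} · ⋯ · B_n^{(i_n)}) for each bit string i ∈ {0,1}^n. Then the inner product Σ_{i ∈ {0,1}^n} conj(ψ(i)) · φ(i) equals tr(E₁ · E₂ · ⋯ · E_n), where E_k = Σ_{s ∈ {0,1}} conj(A_k^{(s)}) ⊗ B_k^{(s)} is the transfer matrix at site k, conj denotes the entrywise complex conjugate, and ⊗ denotes the Kronecker product. -/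
private lemma kron_list {w : ℕ} : ∀ {n : ℕ} (A B : Fin n → Matrix (Fin w) (Fin w) ℂ),
    (List.ofFn fun k => Matrix.kroneckerMap (· * ·) ((A k).map (starRingEnd ℂ)) (B k)).prod =
      Matrix.kroneckerMap (· * ·) (((List.ofFn A).prod).map (starRingEnd ℂ)) (List.ofFn B).prod
  | 0, A, B => by
      simp [List.ofFn_zero, Matrix.one_kronecker_one, Matrix.map_one]
  | n + 1, A, B => by
      rw [List.ofFn_succ, List.ofFn_succ, List.ofFn_succ, List.prod_cons, List.prod_cons,
        List.prod_cons, kron_list (fun k => A k.succ) (fun k => B k.succ),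
        ← Matrix.mul_kronecker_mul, Matrix.map_mul]

private lemma sum_prod_list {R : Type*} [Semiring R] : ∀ {n : ℕ} (M : Fin n → Fin 2 → R),
    (∑ i : Fin n → Fin 2, (List.ofFn fun k => M k (i k)).prod) =
      (List.ofFn fun k => ∑ s : Fin 2, M k s).prod
  | 0, M => by simp
  | n + 1, M => by
      rw [← (Fin.consEquiv fun _ : Fin (n + 1) => Fin 2).sum_comp, Fintype.sum_prod_type]
      simp only [Fin.consEquiv_apply, List.ofFn_succ, List.prod_cons, Fin.cons_zero,
        Fin.cons_succ]
      rw [← sum_prod_list (fun k => M k.succ), Finset.sum_mul]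
      exact Finset.sum_congr rfl fun s _ => (Finset.mul_sum _ _ _).symm

/-- Transfer-matrix evaluation of the MPS inner product. -/
theorem mps_inner_product_transfer {n w : ℕ} (hn : 1 ≤ n) (hw : 1 ≤ w)
    (A B : Fin n → Fin 2 → Matrix (Fin w) (Fin w) ℂ) :
    (∑ i : Fin n → Fin 2,
        (starRingEnd ℂ) ((List.ofFn fun k => A k (i k)).prod.trace) *
          (List.ofFn fun k => B k (i k)).prod.trace) =
      (List.ofFn fun k => ∑ s : Fin 2,
          Matrix.kroneckerMap (· * ·) ((A k s).map (starRingEnd ℂ)) (B k s)).prod.trace := by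
  have h1 : ∀ i : Fin n → Fin 2,
      (starRingEnd ℂ) ((List.ofFn fun k => A k (i k)).prod.trace) *
        (List.ofFn fun k => B k (i k)).prod.trace =
      ((List.ofFn fun k => Matrix.kroneckerMap (· * ·)
          ((A k (i k)).map (starRingEnd ℂ)) (B k (i k))).prod).trace := by
    intro i
    rw [kron_list, Matrix.trace_kronecker]
    congr 1
    simp [Matrix.trace, Matrix.map_apply, map_sum]
  rw [Finset.sum_congr rfl fun i _ => h1 i, ← Matrix.trace_sum]
  have h2 := sum_prod_list
    (fun k s => Matrix.kroneckerMap (fun x y : ℂ => x * y) ((A k s).map (starRingEnd ℂ)) (B k s))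
  exact congrArg Matrix.trace h2
end
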